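/- arXiv:2103.10956 — 2 statements merged into one kernel-verified Lean document; each statement's English description precedes it below -/
import Mathlib

section
/- In the type II theory (K̃_{ij} = 0, C̃_{ijkl} = 0) with homogeneous boundary conditions and no sources, the total energy E(t) = (1/2)∫_Ω (ρ v_i v_i + c θ² + c_{ij} M_i M_j + A_{ijkl} e_{kl} e_{ij} + 2 B_{ijkl} e_{ij} R_{k,l} + K_{ij} τ_{,i} τ_{,j} + C_{ijkl} R_{i,j} R_{k,l}) dv is conserved in time: dE/dt = 0 along any smooth solution of the type II system; moreover this conservation holds without assuming positivity of the constitutive quadratic forms. -/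
open MeasureTheory

/-- The space variable: `Ω ⊂ ℝ³`. -/
abbrev V3 := EuclideanSpace ℝ (Fin 3)

/-- Spatial partial derivative `f_{,j}(x)`. -/
noncomputable def pd (f : V3 → ℝ) (j : Fin 3) (x : V3) : ℝ :=
  fderiv ℝ f x (EuclideanSpace.single j 1)

/-- Linearized strain tensor `e_{ij} = (u_{i,j} + u_{j,i})/2`. -/
noncomputable def strain (u : V3 → Fin 3 → ℝ) (i j : Fin 3) (x : V3) : ℝ :=
  (pd (fun y => u y i) j x + pd (fun y => u y j) i x) / 2

/-! ### auxiliary machinery -/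

/-! ### Space-time calculus helpers -/

/-- joint time derivative -/
noncomputable def Dt (f : ℝ × V3 → ℝ) (p : ℝ × V3) : ℝ := fderiv ℝ f p (1, 0)
/-- joint space derivative -/
noncomputable def Dx (j : Fin 3) (f : ℝ × V3 → ℝ) (p : ℝ × V3) : ℝ :=
  fderiv ℝ f p (0, EuclideanSpace.single j 1)

lemma contDiff_fderiv_apply {E : Type*} [NormedAddCommGroup E] [NormedSpace ℝ E]
    {f : E → ℝ} (hf : ContDiff ℝ (⊤ : ℕ∞) f) (v : E) :
    ContDiff ℝ (⊤ : ℕ∞) (fun p => fderiv ℝ f p v) :=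
  (ContinuousLinearMap.apply ℝ ℝ v).contDiff.comp (hf.fderiv_right (by simp))

lemma contDiff_Dt {f : ℝ × V3 → ℝ} (hf : ContDiff ℝ (⊤ : ℕ∞) f) : ContDiff ℝ (⊤ : ℕ∞) (Dt f) :=
  contDiff_fderiv_apply hf _

lemma contDiff_Dx {f : ℝ × V3 → ℝ} (hf : ContDiff ℝ (⊤ : ℕ∞) f) (j : Fin 3) :
    ContDiff ℝ (⊤ : ℕ∞) (Dx j f) := contDiff_fderiv_apply hf _

lemma hasDerivAt_slice {f : ℝ × V3 → ℝ} (hf : ContDiff ℝ (⊤ : ℕ∞) f) (t : ℝ) (x : V3) :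
    HasDerivAt (fun s => f (s, x)) (Dt f (t, x)) t := by
  have h1 : HasDerivAt (fun s : ℝ => (s, x)) ((1 : ℝ), (0 : V3)) t :=
    (hasDerivAt_id t).prodMk (hasDerivAt_const t x)
  have h2 := (hf.differentiable (by simp) (t, x)).hasFDerivAt
  exact h2.comp_hasDerivAt t h1

lemma deriv_slice {f : ℝ × V3 → ℝ} (hf : ContDiff ℝ (⊤ : ℕ∞) f) (t : ℝ) (x : V3) :
    deriv (fun s => f (s, x)) t = Dt f (t, x) := (hasDerivAt_slice hf t x).deriv

lemma hasFDerivAt_space_slice {f : ℝ × V3 → ℝ} (hf : ContDiff ℝ (⊤ : ℕ∞) f) (t : ℝ) (x : V3) :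
    HasFDerivAt (fun y => f (t, y))
      ((fderiv ℝ f (t, x)).comp (ContinuousLinearMap.inr ℝ ℝ V3)) x := by
  have h1 : HasFDerivAt (fun y : V3 => ((t : ℝ), y)) (ContinuousLinearMap.inr ℝ ℝ V3) x :=
    (hasFDerivAt_const t x).prodMk (hasFDerivAt_id x)
  exact (hf.differentiable (by simp) (t, x)).hasFDerivAt.comp x h1

lemma pd_slice {f : ℝ × V3 → ℝ} (hf : ContDiff ℝ (⊤ : ℕ∞) f) (t : ℝ) (x : V3) (j : Fin 3) :
    pd (fun y => f (t, y)) j x = Dx j f (t, x) := by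
  rw [pd, (hasFDerivAt_space_slice hf t x).fderiv]
  rfl

lemma contDiff_slice_space {f : ℝ × V3 → ℝ} (hf : ContDiff ℝ (⊤ : ℕ∞) f) (t : ℝ) :
    ContDiff ℝ (⊤ : ℕ∞) (fun y => f (t, y)) := hf.comp (contDiff_const.prodMk contDiff_id)

/-- Clairaut for `Dt`/`Dx`. -/
lemma Dt_Dx_comm {f : ℝ × V3 → ℝ} (hf : ContDiff ℝ (⊤ : ℕ∞) f) (j : Fin 3) (p : ℝ × V3) :
    Dt (Dx j f) p = Dx j (Dt f) p := by
  have hd : ∀ q, HasFDerivAt f (fderiv ℝ f q) q :=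
    fun q => (hf.differentiable (by simp) q).hasFDerivAt
  have hf' : ContDiff ℝ (⊤ : ℕ∞) (fderiv ℝ f) := hf.fderiv_right (by simp)
  have hx : HasFDerivAt (fderiv ℝ f) (fderiv ℝ (fderiv ℝ f) p) p :=
    (hf'.differentiable (by simp) p).hasFDerivAt
  have hsymm := second_derivative_symmetric hd hx (1, 0) (0, EuclideanSpace.single j 1)
  have e1 : ∀ v : ℝ × V3, HasFDerivAt (fun q => fderiv ℝ f q v)
      ((ContinuousLinearMap.apply ℝ ℝ v).comp (fderiv ℝ (fderiv ℝ f) p)) p :=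
    fun v => (ContinuousLinearMap.apply ℝ ℝ v).hasFDerivAt.comp p hx
  have e2 : Dt (Dx j f) p = fderiv ℝ (fderiv ℝ f) p (1, 0) (0, EuclideanSpace.single j 1) := by
    unfold Dt Dx
    rw [(e1 (0, EuclideanSpace.single j 1)).fderiv]; rfl
  have e3 : Dx j (Dt f) p = fderiv ℝ (fderiv ℝ f) p (0, EuclideanSpace.single j 1) (1, 0) := by
    unfold Dt Dx
    rw [(e1 (1, 0)).fderiv]; rfl
  rw [e2, e3, hsymm]

/-- linearity of `Dt` for halved sums. -/
lemma Dt_half_add {a b : ℝ × V3 → ℝ} (ha : ContDiff ℝ (⊤ : ℕ∞) a) (hb : ContDiff ℝ (⊤ : ℕ∞) b)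
    (p : ℝ × V3) :
    Dt (fun q => (a q + b q) / 2) p = (Dt a p + Dt b p) / 2 := by
  unfold Dt
  have h : HasFDerivAt (fun q => (a q + b q) / 2)
      ((2:ℝ)⁻¹ • (fderiv ℝ a p + fderiv ℝ b p)) p := by
    have := (((ha.differentiable (by simp) p).hasFDerivAt.add
      (hb.differentiable (by simp) p).hasFDerivAt).const_smul ((2:ℝ)⁻¹))
    have heq : (fun q => (2:ℝ)⁻¹ • (a q + b q)) = fun q => (a q + b q) / 2 := by
      funext q; simp [smul_eq_mul]; ring
    rw [← heq]; exact this
  rw [h.fderiv]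
  simp [smul_eq_mul]
  ring

/-- `Dx` of a product. -/
lemma Dx_mul {f g : ℝ × V3 → ℝ} (hf : ContDiff ℝ (⊤ : ℕ∞) f) (hg : ContDiff ℝ (⊤ : ℕ∞) g)
    (j : Fin 3) (p : ℝ × V3) :
    Dx j (fun q => f q * g q) p = Dx j f p * g p + f p * Dx j g p := by
  unfold Dx
  rw [fderiv_fun_mul (hf.differentiable (by simp) p)
    (hg.differentiable (by simp) p)]
  simp [smul_eq_mul]
  ring

/-- `Dx` of a finite sum. -/
lemma Dx_sum {f : Fin 3 → ℝ × V3 → ℝ} (hf : ∀ i, ContDiff ℝ (⊤ : ℕ∞) (f i))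
    (j : Fin 3) (p : ℝ × V3) :
    Dx j (fun q => ∑ i, f i q) p = ∑ i, Dx j (f i) p := by
  unfold Dx
  rw [fderiv_fun_sum (fun i _ => (hf i).differentiable (by simp) p)]
  simp

lemma Dx_add {f g : ℝ × V3 → ℝ} (hf : ContDiff ℝ (⊤ : ℕ∞) f) (hg : ContDiff ℝ (⊤ : ℕ∞) g)
    (j : Fin 3) (p : ℝ × V3) :
    Dx j (fun q => f q + g q) p = Dx j f p + Dx j g p := by
  unfold Dx
  rw [fderiv_fun_add ((hf.differentiable (by simp) p)) ((hg.differentiable (by simp) p))]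
  simp

open Set in
lemma integral_deriv_open_bounded (U : Set ℝ) (hU : IsOpen U)
    (hUb : Bornology.IsBounded U)
    (f : ℝ → ℝ) (hf : ContDiff ℝ (⊤ : ℕ∞) f) (h0 : ∀ s ∈ frontier U, f s = 0) :
    ∫ s in U, deriv f s = 0 := by
  classical
  obtain ⟨r, hr⟩ := hUb.subset_ball 0
  have hmem : ∀ t ∈ U, -r < t ∧ t < r := by
    intro t ht
    have := hr ht
    rw [Metric.mem_ball, Real.dist_eq, sub_zero, abs_lt] at this
    exact this
  have hnr : (-r : ℝ) ∉ U := fun h => lt_irrefl _ (hmem _ h).1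
  have hrU : (r : ℝ) ∉ U := fun h => lt_irrefl _ (hmem _ h).2
  set A : ℝ → ℝ := fun t => sSup (Uᶜ ∩ Set.Iic t) with hA
  set B : ℝ → ℝ := fun t => sInf (Uᶜ ∩ Set.Ici t) with hB
  have hbddA : ∀ t : ℝ, BddAbove (Uᶜ ∩ Set.Iic t) :=
    fun t => ⟨t, fun z hz => hz.2⟩
  have hbddB : ∀ t : ℝ, BddBelow (Uᶜ ∩ Set.Ici t) :=
    fun t => ⟨t, fun z hz => hz.2⟩
  -- basic facts for t ∈ U
  have hAmem : ∀ t ∈ U, A t ∈ Uᶜ ∩ Set.Iic t := by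
    intro t ht
    exact (hU.isClosed_compl.inter isClosed_Iic).csSup_mem
      ⟨-r, hnr, (hmem t ht).1.le⟩ (hbddA t)
  have hBmem : ∀ t ∈ U, B t ∈ Uᶜ ∩ Set.Ici t := by
    intro t ht
    exact (hU.isClosed_compl.inter isClosed_Ici).csInf_mem
      ⟨r, hrU, (hmem t ht).2.le⟩ (hbddB t)
  have hAle : ∀ t ∈ U, A t ≤ t := fun t ht => (hAmem t ht).2
  have hBge : ∀ t ∈ U, t ≤ B t := fun t ht => (hBmem t ht).2
  have hAlt : ∀ t ∈ U, A t < t := by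
    intro t ht
    rcases (hAle t ht).lt_or_eq with h | h
    · exact h
    · exact absurd (show A t ∈ U by rw [h]; exact ht) (hAmem t ht).1
  have hBgt : ∀ t ∈ U, t < B t := by
    intro t ht
    rcases (hBge t ht).lt_or_eq with h | h
    · exact h
    · exact absurd (show B t ∈ U by rw [← h]; exact ht) (hBmem t ht).1
  have hsub : ∀ t ∈ U, Set.Ioo (A t) (B t) ⊆ U := by
    intro t ht s hs
    by_contra hsU
    rcases le_total s t with h | h
    · exact absurd (le_csSup (hbddA t) (⟨hsU, h⟩ : s ∈ Uᶜ ∩ Set.Iic t))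
        (not_le.mpr hs.1)
    · exact absurd (csInf_le (hbddB t) (⟨hsU, h⟩ : s ∈ Uᶜ ∩ Set.Ici t))
        (not_le.mpr hs.2)
  have hAfr : ∀ t ∈ U, A t ∈ frontier U := by
    intro t ht
    rw [hU.frontier_eq]
    refine ⟨?_, (hAmem t ht).1⟩
    have h1 : Set.Ioo (A t) t ⊆ U := fun s hs =>
      hsub t ht ⟨hs.1, hs.2.trans (hBgt t ht)⟩
    have h2 : A t ∈ closure (Set.Ioo (A t) t) := by
      rw [closure_Ioo (ne_of_lt (hAlt t ht))]
      exact ⟨le_refl _, (hAlt t ht).le⟩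
    exact closure_mono h1 h2
  have hBfr : ∀ t ∈ U, B t ∈ frontier U := by
    intro t ht
    rw [hU.frontier_eq]
    refine ⟨?_, (hBmem t ht).1⟩
    have h1 : Set.Ioo t (B t) ⊆ U := fun s hs =>
      hsub t ht ⟨(hAlt t ht).trans hs.1, hs.2⟩
    have h2 : B t ∈ closure (Set.Ioo t (B t)) := by
      rw [closure_Ioo (ne_of_lt (hBgt t ht))]
      exact ⟨(hBgt t ht).le, le_refl _⟩
    exact closure_mono h1 h2
  -- stability of endpoints on the component
  have hstab : ∀ t ∈ U, ∀ s ∈ Set.Ioo (A t) (B t), A s = A t ∧ B s = B t := by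
    intro t ht s hs
    constructor
    · apply le_antisymm
      · apply csSup_le (⟨A t, (hAmem t ht).1, hs.1.le⟩ : (Uᶜ ∩ Set.Iic s).Nonempty)
        intro z hz
        by_contra hzA
        push_neg at hzA
        exact hz.1 (hsub t ht ⟨hzA, lt_of_le_of_lt hz.2 hs.2⟩)
      · exact le_csSup (hbddA s) ⟨(hAmem t ht).1, hs.1.le⟩
    · apply le_antisymm
      · exact csInf_le (hbddB s) ⟨(hBmem t ht).1, hs.2.le⟩
      · apply le_csInf (⟨B t, (hBmem t ht).1, hs.2.le⟩ : (Uᶜ ∩ Set.Ici s).Nonempty)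
        intro z hz
        by_contra hzB
        push_neg at hzB
        exact hz.1 (hsub t ht ⟨lt_of_lt_of_le hs.1 hz.2, hzB⟩)
  -- rational enumeration
  set q : ℕ → ℝ := fun n => ((Denumerable.eqv ℚ).symm n : ℚ) with hq
  have hqsur : ∀ c : ℚ, ∃ n, q n = (c : ℝ) :=
    fun c => ⟨(Denumerable.eqv ℚ) c, by simp [hq]⟩
  set P : ℕ → Prop :=
    fun n => q n ∈ U ∧ ∀ m < n, q m ∉ Set.Ioo (A (q n)) (B (q n)) with hP
  set J : ℕ → Set ℝ := fun n => if P n then Set.Ioo (A (q n)) (B (q n)) else ∅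
    with hJ
  have hJdef : ∀ n, J n = if P n then Set.Ioo (A (q n)) (B (q n)) else ∅ :=
    fun n => rfl
  have hJsub : ∀ n, J n ⊆ U := by
    intro n
    rw [hJdef]
    split_ifs with h
    · exact hsub _ h.1
    · exact empty_subset _
  have hcover : U = ⋃ n, J n := by
    apply Subset.antisymm
    · intro t ht
      have hex : ∃ n, q n ∈ Set.Ioo (A t) (B t) := by
        obtain ⟨c, hc1, hc2⟩ := exists_rat_btwn ((hAlt t ht).trans (hBgt t ht))
        obtain ⟨n, hn⟩ := hqsur c
        exact ⟨n, by rw [hn]; exact ⟨hc1, hc2⟩⟩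
      set n₀ := Nat.find hex with hn₀
      have hq₀ : q n₀ ∈ Set.Ioo (A t) (B t) := Nat.find_spec hex
      have hqU : q n₀ ∈ U := hsub t ht hq₀
      have heqA : A (q n₀) = A t := (hstab t ht _ hq₀).1
      have heqB : B (q n₀) = B t := (hstab t ht _ hq₀).2
      have hPn : P n₀ := by
        refine ⟨hqU, fun m hm hc => ?_⟩
        rw [heqA, heqB] at hc
        exact Nat.find_min hex hm hc
      refine Set.mem_iUnion.mpr ⟨n₀, ?_⟩
      rw [hJdef, if_pos hPn, heqA, heqB]
      exact ⟨hAlt t ht, hBgt t ht⟩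
    · exact iUnion_subset hJsub
  have hdisj : Pairwise (Function.onFun Disjoint J) := by
    have key : ∀ n m : ℕ, n < m → Disjoint (J n) (J m) := by
      intro n m hnm
      rw [Set.disjoint_left]
      intro s hsn hsm
      rw [hJdef] at hsn hsm
      by_cases hn : P n
      · by_cases hm : P m
        · rw [if_pos hn] at hsn
          rw [if_pos hm] at hsm
          have hsU : s ∈ U := hsub _ hn.1 hsn
          have e1 := hstab _ hn.1 s hsn
          have e2 := hstab _ hm.1 s hsm
          have hself : q n ∈ Set.Ioo (A (q n)) (B (q n)) :=
            ⟨hAlt _ hn.1, hBgt _ hn.1⟩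
          have : q n ∈ Set.Ioo (A (q m)) (B (q m)) := by
            rw [← e2.1, ← e2.2, e1.1, e1.2]
            exact hself
          exact hm.2 n hnm this
        · rw [if_neg hm] at hsm; exact hsm
      · rw [if_neg hn] at hsn; exact hsn
    intro n m hnm
    rcases lt_or_gt_of_ne hnm with h | h
    · exact key n m h
    · exact (key m n h).symm
  have hJmeas : ∀ n, MeasurableSet (J n) := by
    intro n
    rw [hJdef]
    split_ifs
    · exact measurableSet_Ioo
    · exact MeasurableSet.empty
  have hcont : Continuous (deriv f) := by
    have := (contDiff_infty_iff_deriv.mp (hf.of_le (by simp))).2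
    exact this.continuous
  have hint : IntegrableOn (deriv f) U := by
    have hK : IsCompact (closure U) := hUb.isCompact_closure
    exact (hcont.continuousOn.integrableOn_compact hK).mono_set subset_closure
  have hzero : ∀ n, ∫ s in J n, deriv f s = 0 := by
    intro n
    rw [hJdef]
    split_ifs with hPn
    · have hU' : q n ∈ U := hPn.1
      have hab : A (q n) < B (q n) := (hAlt _ hU').trans (hBgt _ hU')
      have : ∫ s in Set.Ioo (A (q n)) (B (q n)), deriv f s
          = ∫ s in (A (q n))..(B (q n)), deriv f s := by
        rw [intervalIntegral.integral_of_le hab.le,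
          MeasureTheory.integral_Ioc_eq_integral_Ioo]
      rw [this, intervalIntegral.integral_deriv_eq_sub
        (fun x _ => (hf.differentiable (by simp)).differentiableAt)
        (hcont.intervalIntegrable _ _)]
      rw [h0 _ (hAfr _ hU'), h0 _ (hBfr _ hU'), sub_zero]
    · simp
  calc ∫ s in U, deriv f s = ∫ s in ⋃ n, J n, deriv f s := by rw [← hcover]
    _ = ∑' n, ∫ s in J n, deriv f s := by
        rw [MeasureTheory.integral_iUnion hJmeas hdisj (hcover ▸ hint)]
    _ = 0 := by simp [hzero]

lemma frontier_preimage_sub {X Y : Type*} [TopologicalSpace X] [TopologicalSpace Y]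
    {L : X → Y} (hL : Continuous L) (s : Set Y) :
    frontier (L ⁻¹' s) ⊆ L ⁻¹' (frontier s) := by
  intro x hx
  simp only [frontier, Set.mem_diff] at hx
  simp only [Set.mem_preimage, frontier, Set.mem_diff]
  exact ⟨(Continuous.closure_preimage_subset hL s) hx.1,
    fun h => hx.2 (preimage_interior_subset_interior_preimage hL h)⟩

lemma integrableOn_of_bounded {f : V3 → ℝ} (hf : Continuous f) {s : Set V3}
    (hs : Bornology.IsBounded s) : IntegrableOn f s :=
  (hf.continuousOn.integrableOn_compact hs.isCompact_closure).mono_set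
    subset_closure

lemma integral_pd_zero (Ω : Set V3) (hΩo : IsOpen Ω)
    (hΩb : Bornology.IsBounded Ω) (hΩm : MeasurableSet Ω)
    (F : V3 → ℝ) (hF : ContDiff ℝ (⊤ : ℕ∞) F)
    (hF0 : ∀ x ∈ frontier Ω, F x = 0) (j : Fin 3) :
    ∫ x in Ω, pd F j x = 0 := by
  obtain ⟨r, hr⟩ := hΩb.subset_ball 0
  have hpdc : Continuous (fun x => pd F j x) :=
    (contDiff_fderiv_apply hF _).continuous
  have hint : IntegrableOn (fun x => pd F j x) Ω := integrableOn_of_bounded hpdc hΩb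
  have hindint : Integrable (Ω.indicator (fun x => pd F j x)) volume :=
    (integrable_indicator_iff hΩm).mpr hint
  rw [← integral_indicator hΩm]
  -- measure preserving transfer
  set e1 := (MeasurableEquiv.toLp 2 (Fin 3 → ℝ)).symm with he1
  set e2 := MeasurableEquiv.piFinSuccAbove (fun _ : Fin 3 => ℝ) j with he2
  set L : ℝ × (Fin 2 → ℝ) → V3 := e1.symm ∘ e2.symm with hL
  have mp1 : MeasurePreserving (⇑e1.symm) volume volume :=
    (EuclideanSpace.volume_preserving_symm_measurableEquiv_toLp (Fin 3)).symm
  have mp2 : MeasurePreserving (⇑e2.symm) (volume.prod volume) volume := by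
    have base := measurePreserving_piFinSuccAbove (fun _ : Fin 3 => (volume : Measure ℝ)) j
    rw [← volume_pi, ← volume_pi] at base
    exact base.symm _
  have mpL : MeasurePreserving L (volume.prod volume) volume := mp1.comp mp2
  have hemb : MeasurableEmbedding L :=
    e1.symm.measurableEmbedding.comp e2.symm.measurableEmbedding
  have key := mpL.integral_comp hemb (Ω.indicator (fun x => pd F j x))
  rw [← key]
  have hintL : Integrable ((Ω.indicator fun x => pd F j x) ∘ L) (volume.prod volume) :=
    (mpL.integrable_comp_emb hemb).mpr hindint
  rw [show (fun x => (Ω.indicator fun x => pd F j x) (L x))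
      = (Ω.indicator fun x => pd F j x) ∘ L from rfl]
  rw [MeasureTheory.integral_prod_symm _ hintL]
  -- inner integral vanishes for every y
  have inner : ∀ y : Fin 2 → ℝ,
      (∫ s : ℝ, ((Ω.indicator fun x => pd F j x) ∘ L) (s, y)) = 0 := by
    intro y
    set d : V3 := EuclideanSpace.single j 1 with hd
    set c : V3 := L (0, y) with hc
    have hcoord : ∀ s : ℝ, ∀ k : Fin 3,
        L (s, y) k = Fin.insertNth (α := fun _ => ℝ) j s y k :=
      fun s k => rfl
    have hline : ∀ s : ℝ, L (s, y) = c + s • d := by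
      intro s
      ext k
      have hrhs : (c + s • d) k = c k + s * d k := rfl
      rw [hrhs, hcoord s k]
      rcases eq_or_ne k j with hk | hk
      · subst hk
        rw [Fin.insertNth_apply_same]
        rw [hc, hcoord 0 k, Fin.insertNth_apply_same]
        have h3 : d k = 1 := by simp [hd, EuclideanSpace.single_apply]
        rw [h3]; ring
      · obtain ⟨m, hm⟩ := Fin.exists_succAbove_eq hk
        have h1 : Fin.insertNth (α := fun _ => ℝ) j s y k = y m := by
          rw [← hm, Fin.insertNth_apply_succAbove]
        have h2 : c k = y m := by
          rw [hc, hcoord 0 k, ← hm, Fin.insertNth_apply_succAbove]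
        have h3 : d k = 0 := by simp [hd, EuclideanSpace.single_apply, hk]
        rw [h1, h2, h3]; ring
    set g : ℝ → ℝ := fun s => F (c + s • d) with hg
    have hgsmooth : ContDiff ℝ (⊤ : ℕ∞) g :=
      hF.comp (contDiff_const.add (contDiff_id.smul contDiff_const))
    have hld : ∀ s : ℝ, HasDerivAt (fun s' : ℝ => c + s' • d) d s := by
      intro s
      simpa using ((hasDerivAt_id s).smul_const d).const_add c
    have hgd : ∀ s : ℝ, deriv g s = pd F j (c + s • d) := by
      intro s
      have h := ((hF.differentiable (by simp) (c + s • d)).hasFDerivAt.comp_hasDerivAt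
        s (hld s))
      have h' : HasDerivAt g (fderiv ℝ F (c + s • d) d) s := h
      rw [h'.deriv]
      rfl
    set U : Set ℝ := (fun s : ℝ => c + s • d) ⁻¹' Ω with hU
    have hUopen : IsOpen U :=
      hΩo.preimage (continuous_const.add (continuous_id.smul continuous_const))
    have hUb : Bornology.IsBounded U := by
      apply (Metric.isBounded_ball (x := (0:ℝ)) (r := r + ‖c‖)).subset
      intro s hs
      have h1 : ‖c + s • d‖ < r := by
        have := hr hs
        rwa [Metric.mem_ball, dist_zero_right] at this
      have hnd : ‖d‖ = 1 := by
        rw [hd, EuclideanSpace.norm_single, norm_one]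
      have h2 : |s| = ‖s • d‖ := by rw [norm_smul, hnd, mul_one]; rfl
      rw [Metric.mem_ball, Real.dist_eq, sub_zero]
      calc |s| = ‖s • d‖ := h2
        _ = ‖(c + s • d) - c‖ := by rw [add_sub_cancel_left]
        _ ≤ ‖c + s • d‖ + ‖c‖ := norm_sub_le _ _
        _ < r + ‖c‖ := by linarith
    have hU0 : ∀ s ∈ frontier U, g s = 0 := by
      intro s hs
      exact hF0 _ (frontier_preimage_sub
        (continuous_const.add (continuous_id.smul continuous_const)) Ω hs)
    have h1d := integral_deriv_open_bounded U hUopen hUb g hgsmooth hU0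
    calc (∫ s : ℝ, ((Ω.indicator fun x => pd F j x) ∘ L) (s, y))
        = ∫ s : ℝ, U.indicator (fun s => deriv g s) s := by
          apply integral_congr_ae
          filter_upwards with s
          show Ω.indicator (fun x => pd F j x) (L (s, y)) = _
          rw [hline s]
          by_cases hmem : (c + s • d) ∈ Ω
          · rw [Set.indicator_of_mem hmem, Set.indicator_of_mem (by exact hmem),
              hgd s]
          · rw [Set.indicator_of_notMem hmem,
              Set.indicator_of_notMem (by exact hmem)]
      _ = ∫ s in U, deriv g s := integral_indicator (hUopen.measurableSet)
      _ = 0 := h1d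
  rw [integral_congr_ae (Filter.Eventually.of_forall inner)]
  simp

lemma sum1_congr {f g : Fin 3 → ℝ} (h : ∀ i, f i = g i) :
    (∑ i, f i) = ∑ i, g i := Finset.sum_congr rfl fun i _ => h i

lemma sum2_congr {f g : Fin 3 → Fin 3 → ℝ} (h : ∀ i j, f i j = g i j) :
    (∑ i, ∑ j, f i j) = ∑ i, ∑ j, g i j :=
  Finset.sum_congr rfl fun i _ => Finset.sum_congr rfl fun j _ => h i j

lemma sum4_congr {f g : Fin 3 → Fin 3 → Fin 3 → Fin 3 → ℝ}
    (h : ∀ i j k l, f i j k l = g i j k l) :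
    (∑ i, ∑ j, ∑ k, ∑ l, f i j k l) = ∑ i, ∑ j, ∑ k, ∑ l, g i j k l :=
  Finset.sum_congr rfl fun i _ => Finset.sum_congr rfl fun j _ =>
    Finset.sum_congr rfl fun k _ => Finset.sum_congr rfl fun l _ => h i j k l

lemma sum2_swap (f : Fin 3 → Fin 3 → ℝ) :
    (∑ i, ∑ j, f i j) = ∑ i, ∑ j, f j i := by
  simp only [Fin.sum_univ_three]; ring

lemma sum4_swap12 (f : Fin 3 → Fin 3 → Fin 3 → Fin 3 → ℝ) :
    (∑ i, ∑ j, ∑ k, ∑ l, f i j k l) = ∑ i, ∑ j, ∑ k, ∑ l, f j i k l := by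
  simp only [Fin.sum_univ_three]; ring

lemma sum4_swap34 (f : Fin 3 → Fin 3 → Fin 3 → Fin 3 → ℝ) :
    (∑ i, ∑ j, ∑ k, ∑ l, f i j k l) = ∑ i, ∑ j, ∑ k, ∑ l, f i j l k := by
  simp only [Fin.sum_univ_three]; ring

lemma sum4_pairswap (f : Fin 3 → Fin 3 → Fin 3 → Fin 3 → ℝ) :
    (∑ i, ∑ j, ∑ k, ∑ l, f i j k l) = ∑ i, ∑ j, ∑ k, ∑ l, f k l i j := by
  simp only [Fin.sum_univ_three]; ring

lemma sum1_factor (f : Fin 3 → ℝ) : (∑ i, 2 * f i) = 2 * ∑ i, f i :=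
  (Finset.mul_sum _ _ _).symm

lemma sum2_factor (f : Fin 3 → Fin 3 → ℝ) :
    (∑ i, ∑ j, 2 * f i j) = 2 * ∑ i, ∑ j, f i j := by
  simp only [← Finset.mul_sum]

lemma sum4_factor (f : Fin 3 → Fin 3 → Fin 3 → Fin 3 → ℝ) :
    (∑ i, ∑ j, ∑ k, ∑ l, 2 * f i j k l) = 2 * ∑ i, ∑ j, ∑ k, ∑ l, f i j k l := by
  simp only [← Finset.mul_sum]

lemma symmetrize4 (C : Fin 3 → Fin 3 → Fin 3 → Fin 3 → ℝ)
    (VX E' W : Fin 3 → Fin 3 → ℝ)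
    (hC : ∀ i j k l, C i j k l = C j i k l)
    (hE' : ∀ i j, E' i j = (VX i j + VX j i) / 2) :
    (∑ i, ∑ j, ∑ k, ∑ l, VX j i * (C i j k l * W k l))
      = ∑ i, ∑ j, ∑ k, ∑ l, C i j k l * (E' i j * W k l) := by
  have h1 : (∑ i, ∑ j, ∑ k, ∑ l, VX j i * (C i j k l * W k l))
      = ∑ i, ∑ j, ∑ k, ∑ l, VX i j * (C i j k l * W k l) :=
    (sum4_swap12 _).trans (sum4_congr fun i j k l => by rw [hC j i k l])
  have h2 : (∑ i, ∑ j, ∑ k, ∑ l, VX j i * (C i j k l * W k l))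
      + (∑ i, ∑ j, ∑ k, ∑ l, VX i j * (C i j k l * W k l))
      = 2 * ∑ i, ∑ j, ∑ k, ∑ l, C i j k l * (E' i j * W k l) :=
    calc (∑ i, ∑ j, ∑ k, ∑ l, VX j i * (C i j k l * W k l))
        + (∑ i, ∑ j, ∑ k, ∑ l, VX i j * (C i j k l * W k l))
        = ∑ i, ∑ j, ∑ k, ∑ l,
            (VX j i * (C i j k l * W k l) + VX i j * (C i j k l * W k l)) := by
          simp only [← Finset.sum_add_distrib]
      _ = ∑ i, ∑ j, ∑ k, ∑ l, 2 * (C i j k l * (E' i j * W k l)) :=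
          sum4_congr fun i j k l => by rw [hE' i j]; ring
      _ = 2 * ∑ i, ∑ j, ∑ k, ∑ l, C i j k l * (E' i j * W k l) := sum4_factor _
  linarith [h1, h2]

lemma symmetrize2 (a : Fin 3 → Fin 3 → ℝ) (VX E' : Fin 3 → Fin 3 → ℝ) (θ : ℝ)
    (ha : ∀ i j, a i j = a j i)
    (hE' : ∀ i j, E' i j = (VX i j + VX j i) / 2) :
    (∑ i, ∑ j, VX j i * (a i j * θ)) = ∑ i, ∑ j, a i j * (θ * E' i j) := by
  have h1 : (∑ i, ∑ j, VX j i * (a i j * θ))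
      = ∑ i, ∑ j, VX i j * (a i j * θ) :=
    (sum2_swap _).trans (sum2_congr fun i j => by rw [ha j i])
  have h2 : (∑ i, ∑ j, VX j i * (a i j * θ)) + (∑ i, ∑ j, VX i j * (a i j * θ))
      = 2 * ∑ i, ∑ j, a i j * (θ * E' i j) :=
    calc (∑ i, ∑ j, VX j i * (a i j * θ)) + (∑ i, ∑ j, VX i j * (a i j * θ))
        = ∑ i, ∑ j, (VX j i * (a i j * θ) + VX i j * (a i j * θ)) := by
          simp only [← Finset.sum_add_distrib]
      _ = ∑ i, ∑ j, 2 * (a i j * (θ * E' i j)) :=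
          sum2_congr fun i j => by rw [hE' i j]; ring
      _ = 2 * ∑ i, ∑ j, a i j * (θ * E' i j) := sum2_factor _
  linarith [h1, h2]

lemma energy_alg
    (ρ c : ℝ)
    (At Bt Ct : Fin 3 → Fin 3 → Fin 3 → Fin 3 → ℝ)
    (Kt aT bT dT cT : Fin 3 → Fin 3 → ℝ)
    (hAsym : ∀ i j k l, At i j k l = At j i k l ∧ At i j k l = At k l i j)
    (hBsym : ∀ i j k l, Bt i j k l = Bt j i k l ∧ Bt i j k l = Bt k l i j)
    (hCsym : ∀ i j k l, Ct i j k l = Ct j i k l ∧ Ct i j k l = Ct k l i j)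
    (hKsym : ∀ i j, Kt i j = Kt j i) (haSym : ∀ i j, aT i j = aT j i)
    (hbSym : ∀ i j, bT i j = bT j i) (hdSym : ∀ i j, dT i j = dT j i)
    (hcSym : ∀ i j, cT i j = cT j i)
    (V V' M M' G G' : Fin 3 → ℝ) (θ θ' : ℝ)
    (E E' VX MX Rx : Fin 3 → Fin 3 → ℝ)
    (hE' : ∀ i j, E' i j = (VX i j + VX j i) / 2) :
    ρ * (∑ i, 2 * (V i * V' i)) + c * (2 * (θ * θ'))
    + (∑ i, ∑ j, cT i j * (M' i * M j + M i * M' j))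
    + (∑ i, ∑ j, ∑ k, ∑ l, At i j k l * (E' k l * E i j + E k l * E' i j))
    + 2 * (∑ i, ∑ j, ∑ k, ∑ l, Bt i j k l * (E' i j * Rx k l + E i j * MX k l))
    + (∑ i, ∑ j, Kt i j * (G' i * G j + G i * G' j))
    + (∑ i, ∑ j, ∑ k, ∑ l, Ct i j k l * (MX i j * Rx k l + Rx i j * MX k l))
    = 2 * ( (∑ j, ∑ i, VX i j *
          ((∑ k, ∑ l, At j i k l * E k l) - aT j i * θ + ∑ k, ∑ l, Bt j i k l * Rx l k))
      + (∑ i, V i * (ρ * V' i))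
      + (∑ j, G' j * (-(∑ i, dT j i * M i) + ∑ i, Kt j i * G i))
      + θ * (c * θ' + (∑ i, ∑ j, aT i j * E' i j) + ∑ i, ∑ j, bT i j * MX i j)
      + (∑ j, ∑ i, MX i j *
          ((∑ k, ∑ l, Bt k l j i * E k l) - bT j i * θ + ∑ k, ∑ l, Ct j i k l * Rx k l))
      + ∑ i, M i * ((∑ j, cT i j * M' j) + ∑ j, dT i j * G' j) ) := by
  have hB2 : ∀ i j k l, Bt i j l k = Bt i j k l := fun i j k l =>
    ((hBsym i j l k).2).trans (((hBsym l k i j).1).trans ((hBsym i j k l).2).symm)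
  simp only [mul_add, mul_sub, add_mul, sub_mul, Finset.mul_sum, Finset.sum_add_distrib,
    Finset.sum_sub_distrib, mul_neg, neg_mul]
  -- canonical atoms
  -- LHS conversions
  have L1 : (∑ i, ρ * (2 * (V i * V' i))) = 2 * ∑ i, V i * (ρ * V' i) := by
    rw [← sum1_factor]
    exact sum1_congr fun i => by ring
  have L2 : (∑ i, ∑ j, cT i j * (M' i * M j)) = ∑ i, ∑ j, cT i j * (M i * M' j) :=
    (sum2_swap _).trans (sum2_congr fun i j => by rw [hcSym j i]; ring)
  have L4 : (∑ i, ∑ j, ∑ k, ∑ l, At i j k l * (E' k l * E i j))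
      = ∑ i, ∑ j, ∑ k, ∑ l, At i j k l * (E' i j * E k l) :=
    (sum4_pairswap _).trans (sum4_congr fun i j k l => by rw [(hAsym k l i j).2])
  have L5 : (∑ i, ∑ j, ∑ k, ∑ l, At i j k l * (E k l * E' i j))
      = ∑ i, ∑ j, ∑ k, ∑ l, At i j k l * (E' i j * E k l) :=
    sum4_congr fun i j k l => by ring
  have L9 : (∑ i, ∑ j, Kt i j * (G i * G' j)) = ∑ i, ∑ j, Kt i j * (G' i * G j) :=
    (sum2_swap _).trans (sum2_congr fun i j => by rw [hKsym j i]; ring)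
  have L11 : (∑ i, ∑ j, ∑ k, ∑ l, Ct i j k l * (Rx i j * MX k l))
      = ∑ i, ∑ j, ∑ k, ∑ l, Ct i j k l * (MX i j * Rx k l) :=
    (sum4_pairswap _).trans (sum4_congr fun i j k l => by rw [(hCsym k l i j).2]; ring)
  -- RHS conversions
  have R1 : (∑ j, ∑ i, ∑ k, ∑ l, 2 * (VX i j * (At j i k l * E k l)))
      = 2 * ∑ i, ∑ j, ∑ k, ∑ l, At i j k l * (E' i j * E k l) := by
    rw [sum4_factor]
    rw [symmetrize4 At VX E' E (fun i j k l => (hAsym i j k l).1.symm ▸ rfl) hE']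
  have L6 : (∑ i, ∑ j, ∑ k, ∑ l, 2 * (Bt i j k l * (E' i j * Rx k l)))
      = 2 * ∑ i, ∑ j, ∑ k, ∑ l, Bt i j k l * (E' i j * Rx k l) := sum4_factor _
  have L7 : (∑ i, ∑ j, ∑ k, ∑ l, 2 * (Bt i j k l * (E i j * MX k l)))
      = 2 * ∑ i, ∑ j, ∑ k, ∑ l, Bt i j k l * (E i j * MX k l) := sum4_factor _
  have R2 : (∑ j, ∑ i, 2 * (VX i j * (aT j i * θ)))
      = 2 * ∑ i, ∑ j, aT i j * (θ * E' i j) := by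
    rw [sum2_factor, symmetrize2 aT VX E' θ (fun i j => (haSym i j).symm ▸ rfl) hE']
  have R3 : (∑ j, ∑ i, ∑ k, ∑ l, 2 * (VX i j * (Bt j i k l * Rx l k)))
      = 2 * ∑ i, ∑ j, ∑ k, ∑ l, Bt i j k l * (E' i j * Rx k l) := by
    rw [sum4_factor, symmetrize4 Bt VX E' (fun k l => Rx l k)
      (fun i j k l => (hBsym i j k l).1.symm ▸ rfl) hE']
    exact congrArg (2 * ·)
      ((sum4_swap34 _).trans (sum4_congr fun i j k l => by rw [hB2 i j k l]))
  have R4 : (∑ i, 2 * (V i * (ρ * V' i))) = 2 * ∑ i, V i * (ρ * V' i) :=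
    sum1_factor _
  have R5 : (∑ j : Fin 3, -∑ i : Fin 3, 2 * (G' j * (dT j i * M i)))
      = -(2 * ∑ i, ∑ j, dT i j * (G' i * M j)) := by
    rw [Finset.sum_neg_distrib]
    refine congrArg Neg.neg ?_
    rw [sum2_factor]
    exact congrArg (2 * ·) (sum2_congr fun i j => by ring)
  have R6 : (∑ j, ∑ i, 2 * (G' j * (Kt j i * G i)))
      = 2 * ∑ i, ∑ j, Kt i j * (G' i * G j) := by
    rw [sum2_factor]
    exact congrArg (2 * ·) (sum2_congr fun i j => by ring)
  have R8 : (∑ i, ∑ j, 2 * (θ * (aT i j * E' i j)))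
      = 2 * ∑ i, ∑ j, aT i j * (θ * E' i j) := by
    rw [sum2_factor]
    exact congrArg (2 * ·) (sum2_congr fun i j => by ring)
  have R9 : (∑ i, ∑ j, 2 * (θ * (bT i j * MX i j)))
      = 2 * ∑ i, ∑ j, bT i j * (θ * MX i j) := by
    rw [sum2_factor]
    exact congrArg (2 * ·) (sum2_congr fun i j => by ring)
  have R10 : (∑ j, ∑ i, ∑ k, ∑ l, 2 * (MX i j * (Bt k l j i * E k l)))
      = 2 * ∑ i, ∑ j, ∑ k, ∑ l, Bt i j k l * (E i j * MX k l) := by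
    rw [sum4_factor]
    exact congrArg (2 * ·) ((sum4_pairswap _).trans ((sum4_swap34 _).trans
      (sum4_congr fun i j k l => by rw [hB2 i j k l]; ring)))
  have R11 : (∑ j, ∑ i, 2 * (MX i j * (bT j i * θ)))
      = 2 * ∑ i, ∑ j, bT i j * (θ * MX i j) := by
    rw [sum2_factor]
    exact congrArg (2 * ·)
      ((sum2_swap _).trans (sum2_congr fun i j => by rw [hbSym j i]; ring))
  have R12 : (∑ j, ∑ i, ∑ k, ∑ l, 2 * (MX i j * (Ct j i k l * Rx k l)))
      = 2 * ∑ i, ∑ j, ∑ k, ∑ l, Ct i j k l * (MX i j * Rx k l) := by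
    rw [sum4_factor]
    exact congrArg (2 * ·)
      ((sum4_swap12 _).trans (sum4_congr fun i j k l => by rw [(hCsym j i k l).1]; ring))
  have R13 : (∑ i, ∑ j, 2 * (M i * (cT i j * M' j)))
      = 2 * ∑ i, ∑ j, cT i j * (M i * M' j) := by
    rw [sum2_factor]
    exact congrArg (2 * ·) (sum2_congr fun i j => by ring)
  have R14 : (∑ i, ∑ j, 2 * (M i * (dT i j * G' j)))
      = 2 * ∑ i, ∑ j, dT i j * (G' i * M j) := by
    rw [sum2_factor]
    exact congrArg (2 * ·)
      ((sum2_swap _).trans (sum2_congr fun i j => by rw [hdSym j i]; ring))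
  rw [L1, L2, L4, L5, L6, L7, L9, L11, R1, R2, R3, R4, R5, R6, R8, R9, R10, R11,
    R12, R13, R14]
  ring

set_option maxHeartbeats 4000000 in
/-- Conservation of energy in the type II theory (`K̃ = 0`, `C̃ = 0`).
Along any smooth solution of the type II system on a bounded smooth domain with
homogeneous Dirichlet data and no sources, the total energy
`E(t) = (1/2)∫_Ω (ρ v_i v_i + c θ² + c_{ij}M_iM_j + A_{ijkl}e_{kl}e_{ij}
 + 2B_{ijkl}e_{ij}R_{k,l} + K_{ij}τ_{,i}τ_{,j} + C_{ijkl}R_{i,j}R_{k,l}) dv`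
is conserved: `dE/dt = 0`.  No positivity of the constitutive quadratic forms is
assumed — only the symmetries (3.9). -/
theorem stmt6 (Ω : Set V3) (hΩo : IsOpen Ω) (hΩb : Bornology.IsBounded Ω)
    (hΩm : MeasurableSet Ω)
    (ρ c : ℝ) (hρ : 0 < ρ) (hc : 0 < c)
    (At Bt Ct : Fin 3 → Fin 3 → Fin 3 → Fin 3 → ℝ)
    (Kt aT bT dT cT : Fin 3 → Fin 3 → ℝ)
    -- symmetries (3.9)
    (hAsym : ∀ i j k l, At i j k l = At j i k l ∧ At i j k l = At k l i j)
    (hBsym : ∀ i j k l, Bt i j k l = Bt j i k l ∧ Bt i j k l = Bt k l i j)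
    (hCsym : ∀ i j k l, Ct i j k l = Ct j i k l ∧ Ct i j k l = Ct k l i j)
    (hKsym : ∀ i j, Kt i j = Kt j i) (haSym : ∀ i j, aT i j = aT j i)
    (hbSym : ∀ i j, bT i j = bT j i) (hdSym : ∀ i j, dT i j = dT j i)
    (hcSym : ∀ i j, cT i j = cT j i)
    -- smooth fields
    (u R : ℝ → V3 → Fin 3 → ℝ) (τ : ℝ → V3 → ℝ)
    (hu : ∀ i, ContDiff ℝ (⊤ : ℕ∞) fun p : ℝ × V3 => u p.1 p.2 i)
    (hτ : ContDiff ℝ (⊤ : ℕ∞) fun p : ℝ × V3 => τ p.1 p.2)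
    (hR : ∀ i, ContDiff ℝ (⊤ : ℕ∞) fun p : ℝ × V3 => R p.1 p.2 i)
    -- homogeneous Dirichlet boundary conditions
    (hbc : ∀ t : ℝ, ∀ x ∈ frontier Ω,
      (∀ i, u t x i = 0) ∧ τ t x = 0 ∧ ∀ i, R t x i = 0)
    -- type II field equations (3.5), no sources
    (heq1 : ∀ t : ℝ, ∀ x ∈ Ω, ∀ i,
      ρ * deriv (fun s => deriv (fun r => u r x i) s) t =
        ∑ j, pd (fun y =>
          (∑ k, ∑ l, At j i k l * strain (u t) k l y)
          - aT j i * deriv (fun s => τ s y) t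
          + ∑ k, ∑ l, Bt j i k l * pd (fun z => R t z l) k y) j x)
    (heq2 : ∀ t : ℝ, ∀ x ∈ Ω,
      c * deriv (fun s => deriv (fun r => τ r x) s) t =
        -(∑ i, ∑ j, aT i j * deriv (fun s => strain (u s) i j x) t)
        + (∑ i, pd (fun y =>
            (-(∑ j, dT i j * deriv (fun s => R s y j) t))
            + ∑ j, Kt i j * pd (τ t) j y) i x)
        - ∑ i, ∑ j, bT i j * pd (fun z => deriv (fun s => R s z i) t) j x)
    (heq3 : ∀ t : ℝ, ∀ x ∈ Ω, ∀ i,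
      (∑ j, cT i j * deriv (fun s => deriv (fun r => R r x j) s) t) =
        (∑ j, pd (fun y =>
          (∑ k, ∑ l, Bt k l j i * strain (u t) k l y)
          - bT j i * deriv (fun s => τ s y) t
          + ∑ k, ∑ l, Ct j i k l * pd (fun z => R t z k) l y) j x)
        - ∑ j, dT i j * pd (fun z => deriv (fun s => τ s z) t) j x) :
    ∀ t : ℝ,
      deriv (fun t' => (1/2) * ∫ x in Ω,
        (ρ * ∑ i, (deriv (fun s => u s x i) t') ^ 2
         + c * (deriv (fun s => τ s x) t') ^ 2
         + (∑ i, ∑ j, cT i j * deriv (fun s => R s x i) t'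
             * deriv (fun s => R s x j) t')
         + (∑ i, ∑ j, ∑ k, ∑ l, At i j k l * strain (u t') k l x
             * strain (u t') i j x)
         + 2 * (∑ i, ∑ j, ∑ k, ∑ l, Bt i j k l * strain (u t') i j x
             * pd (fun z => R t' z k) l x)
         + (∑ i, ∑ j, Kt i j * pd (τ t') i x * pd (τ t') j x)
         + ∑ i, ∑ j, ∑ k, ∑ l, Ct i j k l * pd (fun z => R t' z i) j x
             * pd (fun z => R t' z k) l x)) t = 0 := by
  intro t
  classical
  -- joint (space-time) fields
  set uJ : Fin 3 → ℝ × V3 → ℝ := fun i p => u p.1 p.2 i with huJdef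
  set τJ : ℝ × V3 → ℝ := fun p => τ p.1 p.2 with hτJdef
  set RJ : Fin 3 → ℝ × V3 → ℝ := fun i p => R p.1 p.2 i with hRJdef
  have huJ : ∀ i, ContDiff ℝ (⊤ : ℕ∞) (uJ i) := hu
  have hτJ : ContDiff ℝ (⊤ : ℕ∞) τJ := hτ
  have hRJ : ∀ i, ContDiff ℝ (⊤ : ℕ∞) (RJ i) := hR
  set eJ : Fin 3 → Fin 3 → ℝ × V3 → ℝ :=
    fun i j p => (Dx j (uJ i) p + Dx i (uJ j) p) / 2 with heJdef
  have heJ : ∀ i j, ContDiff ℝ (⊤ : ℕ∞) (eJ i j) := fun i j =>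
    ((contDiff_Dx (huJ i) j).add (contDiff_Dx (huJ j) i)).div_const 2
  set σJ : Fin 3 → Fin 3 → ℝ × V3 → ℝ := fun j i p =>
    (∑ k, ∑ l, At j i k l * eJ k l p) - aT j i * Dt τJ p
      + ∑ k, ∑ l, Bt j i k l * Dx k (RJ l) p with hσJdef
  set GJ : Fin 3 → ℝ × V3 → ℝ := fun i p =>
    -(∑ j, dT i j * Dt (RJ j) p) + ∑ j, Kt i j * Dx j τJ p with hGJdef
  set SJ : Fin 3 → Fin 3 → ℝ × V3 → ℝ := fun j i p =>
    (∑ k, ∑ l, Bt k l j i * eJ k l p) - bT j i * Dt τJ p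
      + ∑ k, ∑ l, Ct j i k l * Dx l (RJ k) p with hSJdef
  have hσJ : ∀ j i, ContDiff ℝ (⊤ : ℕ∞) (σJ j i) := fun j i =>
    (((ContDiff.sum fun k _ => ContDiff.sum fun l _ =>
        contDiff_const.mul (heJ k l)).sub
      (contDiff_const.mul (contDiff_Dt hτJ))).add
      (ContDiff.sum fun k _ => ContDiff.sum fun l _ =>
        contDiff_const.mul (contDiff_Dx (hRJ l) k)))
  have hGJ : ∀ i, ContDiff ℝ (⊤ : ℕ∞) (GJ i) := fun i =>
    ((ContDiff.sum fun j _ => contDiff_const.mul (contDiff_Dt (hRJ j))).neg).add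
      (ContDiff.sum fun j _ => contDiff_const.mul (contDiff_Dx hτJ j))
  have hSJ : ∀ j i, ContDiff ℝ (⊤ : ℕ∞) (SJ j i) := fun j i =>
    (((ContDiff.sum fun k _ => ContDiff.sum fun l _ =>
        contDiff_const.mul (heJ k l)).sub
      (contDiff_const.mul (contDiff_Dt hτJ))).add
      (ContDiff.sum fun k _ => ContDiff.sum fun l _ =>
        contDiff_const.mul (contDiff_Dx (hRJ k) l)))
  set FJ : Fin 3 → ℝ × V3 → ℝ := fun j p =>
    (∑ i, Dt (uJ i) p * σJ j i p) + Dt τJ p * GJ j p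
      + ∑ i, Dt (RJ i) p * SJ j i p with hFJdef
  have hFJ : ∀ j, ContDiff ℝ (⊤ : ℕ∞) (FJ j) := fun j =>
    ((ContDiff.sum fun i _ => (contDiff_Dt (huJ i)).mul (hσJ j i)).add
      ((contDiff_Dt hτJ).mul (hGJ j))).add
      (ContDiff.sum fun i _ => (contDiff_Dt (hRJ i)).mul (hSJ j i))
  set WJ : ℝ × V3 → ℝ := fun p =>
    ρ * ∑ i, Dt (uJ i) p ^ 2 + c * Dt τJ p ^ 2
      + (∑ i, ∑ j, cT i j * Dt (RJ i) p * Dt (RJ j) p)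
      + (∑ i, ∑ j, ∑ k, ∑ l, At i j k l * eJ k l p * eJ i j p)
      + 2 * (∑ i, ∑ j, ∑ k, ∑ l, Bt i j k l * eJ i j p * Dx l (RJ k) p)
      + (∑ i, ∑ j, Kt i j * Dx i τJ p * Dx j τJ p)
      + ∑ i, ∑ j, ∑ k, ∑ l, Ct i j k l * Dx j (RJ i) p * Dx l (RJ k) p with hWJdef
  have hWJsm : ContDiff ℝ (⊤ : ℕ∞) WJ := by
    refine ContDiff.add (ContDiff.add (ContDiff.add (ContDiff.add (ContDiff.add
      (ContDiff.add ?_ ?_) ?_) ?_) ?_) ?_) ?_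
    · exact contDiff_const.mul (ContDiff.sum fun i _ => (contDiff_Dt (huJ i)).pow 2)
    · exact contDiff_const.mul ((contDiff_Dt hτJ).pow 2)
    · exact ContDiff.sum fun i _ => ContDiff.sum fun j _ =>
        (contDiff_const.mul (contDiff_Dt (hRJ i))).mul (contDiff_Dt (hRJ j))
    · exact ContDiff.sum fun i _ => ContDiff.sum fun j _ => ContDiff.sum fun k _ =>
        ContDiff.sum fun l _ => (contDiff_const.mul (heJ k l)).mul (heJ i j)
    · exact contDiff_const.mul (ContDiff.sum fun i _ => ContDiff.sum fun j _ =>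
        ContDiff.sum fun k _ => ContDiff.sum fun l _ =>
          (contDiff_const.mul (heJ i j)).mul (contDiff_Dx (hRJ k) l))
    · exact ContDiff.sum fun i _ => ContDiff.sum fun j _ =>
        (contDiff_const.mul (contDiff_Dx hτJ i)).mul (contDiff_Dx hτJ j)
    · exact ContDiff.sum fun i _ => ContDiff.sum fun j _ => ContDiff.sum fun k _ =>
        ContDiff.sum fun l _ =>
          (contDiff_const.mul (contDiff_Dx (hRJ i) j)).mul (contDiff_Dx (hRJ k) l)
  -- pointwise conversions
  have hc1 : ∀ (t' : ℝ) (x : V3) (i : Fin 3),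
      deriv (fun s => u s x i) t' = Dt (uJ i) (t', x) :=
    fun t' x i => deriv_slice (huJ i) t' x
  have hc2 : ∀ (t' : ℝ) (x : V3),
      deriv (fun s => τ s x) t' = Dt τJ (t', x) :=
    fun t' x => deriv_slice hτJ t' x
  have hc3 : ∀ (t' : ℝ) (x : V3) (i : Fin 3),
      deriv (fun s => R s x i) t' = Dt (RJ i) (t', x) :=
    fun t' x i => deriv_slice (hRJ i) t' x
  have hc5 : ∀ (t' : ℝ) (x : V3) (k l : Fin 3),
      pd (fun z => R t' z k) l x = Dx l (RJ k) (t', x) :=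
    fun t' x k l => pd_slice (hRJ k) t' x l
  have hc6 : ∀ (t' : ℝ) (x : V3) (j : Fin 3),
      pd (τ t') j x = Dx j τJ (t', x) :=
    fun t' x j => pd_slice hτJ t' x j
  have hc4 : ∀ (t' : ℝ) (x : V3) (i j : Fin 3),
      strain (u t') i j x = eJ i j (t', x) := by
    intro t' x i j
    rw [strain,
      show pd (fun y => u t' y i) j x = Dx j (uJ i) (t', x) from pd_slice (huJ i) t' x j,
      show pd (fun y => u t' y j) i x = Dx i (uJ j) (t', x) from pd_slice (huJ j) t' x i]
  have hc7 : ∀ (t' : ℝ) (x : V3) (i : Fin 3),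
      deriv (fun s => deriv (fun r => u r x i) s) t' = Dt (Dt (uJ i)) (t', x) := by
    intro t' x i
    have hfun : (fun s => deriv (fun r => u r x i) s) = fun s => Dt (uJ i) (s, x) :=
      funext fun s => hc1 s x i
    rw [hfun]
    exact deriv_slice (contDiff_Dt (huJ i)) t' x
  have hc8 : ∀ (t' : ℝ) (x : V3),
      deriv (fun s => deriv (fun r => τ r x) s) t' = Dt (Dt τJ) (t', x) := by
    intro t' x
    have hfun : (fun s => deriv (fun r => τ r x) s) = fun s => Dt τJ (s, x) :=
      funext fun s => hc2 s x
    rw [hfun]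
    exact deriv_slice (contDiff_Dt hτJ) t' x
  have hc9 : ∀ (t' : ℝ) (x : V3) (i : Fin 3),
      deriv (fun s => deriv (fun r => R r x i) s) t' = Dt (Dt (RJ i)) (t', x) := by
    intro t' x i
    have hfun : (fun s => deriv (fun r => R r x i) s) = fun s => Dt (RJ i) (s, x) :=
      funext fun s => hc3 s x i
    rw [hfun]
    exact deriv_slice (contDiff_Dt (hRJ i)) t' x
  have hc10 : ∀ (t' : ℝ) (x : V3) (i j : Fin 3),
      deriv (fun s => strain (u s) i j x) t' = Dt (eJ i j) (t', x) := by
    intro t' x i j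
    have hfun : (fun s => strain (u s) i j x) = fun s => eJ i j (s, x) :=
      funext fun s => hc4 s x i j
    rw [hfun]
    exact deriv_slice (heJ i j) t' x
  have hc11 : ∀ (t' : ℝ) (x : V3) (i j : Fin 3),
      pd (fun z => deriv (fun s => R s z i) t') j x = Dx j (Dt (RJ i)) (t', x) := by
    intro t' x i j
    have hfun : (fun z => deriv (fun s => R s z i) t') = fun z => Dt (RJ i) (t', z) :=
      funext fun z => hc3 t' z i
    rw [hfun]
    exact pd_slice (contDiff_Dt (hRJ i)) t' x j
  have hc12 : ∀ (t' : ℝ) (x : V3) (j : Fin 3),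
      pd (fun z => deriv (fun s => τ s z) t') j x = Dx j (Dt τJ) (t', x) := by
    intro t' x j
    have hfun : (fun z => deriv (fun s => τ s z) t') = fun z => Dt τJ (t', z) :=
      funext fun z => hc2 t' z
    rw [hfun]
    exact pd_slice (contDiff_Dt hτJ) t' x j
  -- symmetrized strain rate
  have hE'rel : ∀ (t' : ℝ) (x : V3) (i j : Fin 3),
      Dt (eJ i j) (t', x)
        = (Dx j (Dt (uJ i)) (t', x) + Dx i (Dt (uJ j)) (t', x)) / 2 := by
    intro t' x i j
    have h0 : Dt (eJ i j) (t', x)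
        = (Dt (Dx j (uJ i)) (t', x) + Dt (Dx i (uJ j)) (t', x)) / 2 :=
      Dt_half_add (contDiff_Dx (huJ i) j) (contDiff_Dx (huJ j) i) (t', x)
    rw [h0, Dt_Dx_comm (huJ i) j (t', x), Dt_Dx_comm (huJ j) i (t', x)]
  -- joint field equations
  have hJ1 : ∀ (t' : ℝ), ∀ x ∈ Ω, ∀ i,
      ρ * Dt (Dt (uJ i)) (t', x) = ∑ j, Dx j (σJ j i) (t', x) := by
    intro t' x hx i
    have h := heq1 t' x hx i
    rw [hc7 t' x i] at h
    rw [h]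
    refine Finset.sum_congr rfl fun j _ => ?_
    have hfun : (fun y => (∑ k, ∑ l, At j i k l * strain (u t') k l y)
        - aT j i * deriv (fun s => τ s y) t'
        + ∑ k, ∑ l, Bt j i k l * pd (fun z => R t' z l) k y)
        = fun y => σJ j i (t', y) := by
      funext y
      simp only [hc4, hc2, hc5, hσJdef]
    rw [hfun]
    exact pd_slice (hσJ j i) t' x j
  have hJ2 : ∀ (t' : ℝ), ∀ x ∈ Ω,
      (∑ i, Dx i (GJ i) (t', x))
        = c * Dt (Dt τJ) (t', x) + (∑ i, ∑ j, aT i j * Dt (eJ i j) (t', x))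
          + ∑ i, ∑ j, bT i j * Dx j (Dt (RJ i)) (t', x) := by
    intro t' x hx
    have h := heq2 t' x hx
    rw [hc8 t' x] at h
    simp only [hc10, hc11] at h
    have h3 : (∑ i, pd (fun y => (-(∑ j, dT i j * deriv (fun s => R s y j) t'))
        + ∑ j, Kt i j * pd (τ t') j y) i x) = ∑ i, Dx i (GJ i) (t', x) := by
      refine Finset.sum_congr rfl fun i _ => ?_
      have hfun : (fun y => (-(∑ j, dT i j * deriv (fun s => R s y j) t'))
          + ∑ j, Kt i j * pd (τ t') j y) = fun y => GJ i (t', y) := by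
        funext y
        simp only [hc3, hc6, hGJdef]
      rw [hfun]
      exact pd_slice (hGJ i) t' x i
    rw [h3] at h
    linarith [h]
  have hJ3 : ∀ (t' : ℝ), ∀ x ∈ Ω, ∀ i,
      (∑ j, Dx j (SJ j i) (t', x))
        = (∑ j, cT i j * Dt (Dt (RJ j)) (t', x))
          + ∑ j, dT i j * Dx j (Dt τJ) (t', x) := by
    intro t' x hx i
    have h := heq3 t' x hx i
    simp only [hc9, hc12] at h
    have h4 : (∑ j, pd (fun y => (∑ k, ∑ l, Bt k l j i * strain (u t') k l y)
        - bT j i * deriv (fun s => τ s y) t'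
        + ∑ k, ∑ l, Ct j i k l * pd (fun z => R t' z k) l y) j x)
        = ∑ j, Dx j (SJ j i) (t', x) := by
      refine Finset.sum_congr rfl fun j _ => ?_
      have hfun : (fun y => (∑ k, ∑ l, Bt k l j i * strain (u t') k l y)
          - bT j i * deriv (fun s => τ s y) t'
          + ∑ k, ∑ l, Ct j i k l * pd (fun z => R t' z k) l y)
          = fun y => SJ j i (t', y) := by
        funext y
        simp only [hc4, hc2, hc5, hSJdef]
      rw [hfun]
      exact pd_slice (hSJ j i) t' x j
    rw [h4] at h
    linarith [h]
  -- master pointwise identity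
  have hmaster : ∀ (t' : ℝ), ∀ x ∈ Ω,
      Dt WJ (t', x) = 2 * ∑ j, Dx j (FJ j) (t', x) := by
    intro t' x hx
    -- time derivative of the energy density along the time slice
    have hb1 : HasDerivAt (fun s => ρ * ∑ i, Dt (uJ i) (s, x) ^ 2)
        (ρ * ∑ i, 2 * (Dt (uJ i) (t', x) * Dt (Dt (uJ i)) (t', x))) t' := by
      refine HasDerivAt.const_mul ρ (HasDerivAt.fun_sum fun i _ => ?_)
      simpa [pow_one, mul_assoc] using
        (hasDerivAt_slice (contDiff_Dt (huJ i)) t' x).fun_pow 2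
    have hb2 : HasDerivAt (fun s => c * Dt τJ (s, x) ^ 2)
        (c * (2 * (Dt τJ (t', x) * Dt (Dt τJ) (t', x)))) t' := by
      refine HasDerivAt.const_mul c ?_
      simpa [pow_one, mul_assoc] using
        (hasDerivAt_slice (contDiff_Dt hτJ) t' x).fun_pow 2
    have hb3 : HasDerivAt (fun s => ∑ i, ∑ j, cT i j * Dt (RJ i) (s, x) * Dt (RJ j) (s, x))
        (∑ i, ∑ j, cT i j * (Dt (Dt (RJ i)) (t', x) * Dt (RJ j) (t', x)
          + Dt (RJ i) (t', x) * Dt (Dt (RJ j)) (t', x))) t' := by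
      refine HasDerivAt.fun_sum fun i _ => HasDerivAt.fun_sum fun j _ => ?_
      simpa [mul_assoc] using
        ((hasDerivAt_slice (contDiff_Dt (hRJ i)) t' x).mul
          (hasDerivAt_slice (contDiff_Dt (hRJ j)) t' x)).const_mul (cT i j)
    have hb4 : HasDerivAt
        (fun s => ∑ i, ∑ j, ∑ k, ∑ l, At i j k l * eJ k l (s, x) * eJ i j (s, x))
        (∑ i, ∑ j, ∑ k, ∑ l, At i j k l * (Dt (eJ k l) (t', x) * eJ i j (t', x)
          + eJ k l (t', x) * Dt (eJ i j) (t', x))) t' := by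
      refine HasDerivAt.fun_sum fun i _ => HasDerivAt.fun_sum fun j _ =>
        HasDerivAt.fun_sum fun k _ => HasDerivAt.fun_sum fun l _ => ?_
      simpa [mul_assoc] using
        ((hasDerivAt_slice (heJ k l) t' x).mul
          (hasDerivAt_slice (heJ i j) t' x)).const_mul (At i j k l)
    have hb5 : HasDerivAt
        (fun s => 2 * ∑ i, ∑ j, ∑ k, ∑ l, Bt i j k l * eJ i j (s, x) * Dx l (RJ k) (s, x))
        (2 * ∑ i, ∑ j, ∑ k, ∑ l, Bt i j k l * (Dt (eJ i j) (t', x) * Dx l (RJ k) (t', x)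
          + eJ i j (t', x) * Dx l (Dt (RJ k)) (t', x))) t' := by
      refine HasDerivAt.const_mul 2 (HasDerivAt.fun_sum fun i _ => HasDerivAt.fun_sum fun j _ =>
        HasDerivAt.fun_sum fun k _ => HasDerivAt.fun_sum fun l _ => ?_)
      have h := ((hasDerivAt_slice (heJ i j) t' x).mul
        (hasDerivAt_slice (contDiff_Dx (hRJ k) l) t' x)).const_mul (Bt i j k l)
      rw [Dt_Dx_comm (hRJ k) l (t', x)] at h
      simpa [mul_assoc] using h
    have hb6 : HasDerivAt (fun s => ∑ i, ∑ j, Kt i j * Dx i τJ (s, x) * Dx j τJ (s, x))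
        (∑ i, ∑ j, Kt i j * (Dx i (Dt τJ) (t', x) * Dx j τJ (t', x)
          + Dx i τJ (t', x) * Dx j (Dt τJ) (t', x))) t' := by
      refine HasDerivAt.fun_sum fun i _ => HasDerivAt.fun_sum fun j _ => ?_
      have h := ((hasDerivAt_slice (contDiff_Dx hτJ i) t' x).mul
        (hasDerivAt_slice (contDiff_Dx hτJ j) t' x)).const_mul (Kt i j)
      rw [Dt_Dx_comm hτJ i (t', x), Dt_Dx_comm hτJ j (t', x)] at h
      simpa [mul_assoc] using h
    have hb7 : HasDerivAt
        (fun s => ∑ i, ∑ j, ∑ k, ∑ l, Ct i j k l * Dx j (RJ i) (s, x) * Dx l (RJ k) (s, x))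
        (∑ i, ∑ j, ∑ k, ∑ l, Ct i j k l * (Dx j (Dt (RJ i)) (t', x) * Dx l (RJ k) (t', x)
          + Dx j (RJ i) (t', x) * Dx l (Dt (RJ k)) (t', x))) t' := by
      refine HasDerivAt.fun_sum fun i _ => HasDerivAt.fun_sum fun j _ =>
        HasDerivAt.fun_sum fun k _ => HasDerivAt.fun_sum fun l _ => ?_
      have h := ((hasDerivAt_slice (contDiff_Dx (hRJ i) j) t' x).mul
        (hasDerivAt_slice (contDiff_Dx (hRJ k) l) t' x)).const_mul (Ct i j k l)
      rw [Dt_Dx_comm (hRJ i) j (t', x), Dt_Dx_comm (hRJ k) l (t', x)] at h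
      simpa [mul_assoc] using h
    have hLHSval : Dt WJ (t', x) =
        ρ * ∑ i, 2 * (Dt (uJ i) (t', x) * Dt (Dt (uJ i)) (t', x))
        + c * (2 * (Dt τJ (t', x) * Dt (Dt τJ) (t', x)))
        + (∑ i, ∑ j, cT i j * (Dt (Dt (RJ i)) (t', x) * Dt (RJ j) (t', x)
            + Dt (RJ i) (t', x) * Dt (Dt (RJ j)) (t', x)))
        + (∑ i, ∑ j, ∑ k, ∑ l, At i j k l * (Dt (eJ k l) (t', x) * eJ i j (t', x)
            + eJ k l (t', x) * Dt (eJ i j) (t', x)))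
        + 2 * (∑ i, ∑ j, ∑ k, ∑ l, Bt i j k l * (Dt (eJ i j) (t', x) * Dx l (RJ k) (t', x)
            + eJ i j (t', x) * Dx l (Dt (RJ k)) (t', x)))
        + (∑ i, ∑ j, Kt i j * (Dx i (Dt τJ) (t', x) * Dx j τJ (t', x)
            + Dx i τJ (t', x) * Dx j (Dt τJ) (t', x)))
        + ∑ i, ∑ j, ∑ k, ∑ l, Ct i j k l * (Dx j (Dt (RJ i)) (t', x) * Dx l (RJ k) (t', x)
            + Dx j (RJ i) (t', x) * Dx l (Dt (RJ k)) (t', x)) := by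
      rw [← deriv_slice hWJsm t' x]
      exact ((((((hb1.add hb2).add hb3).add hb4).add hb5).add hb6).add hb7).deriv
    -- spatial divergence of the flux
    have hdivj : ∀ j, Dx j (FJ j) (t', x) =
        (∑ i, (Dx j (Dt (uJ i)) (t', x) * σJ j i (t', x)
          + Dt (uJ i) (t', x) * Dx j (σJ j i) (t', x)))
        + (Dx j (Dt τJ) (t', x) * GJ j (t', x) + Dt τJ (t', x) * Dx j (GJ j) (t', x))
        + ∑ i, (Dx j (Dt (RJ i)) (t', x) * SJ j i (t', x)
          + Dt (RJ i) (t', x) * Dx j (SJ j i) (t', x)) := by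
      intro j
      have h0 : Dx j (FJ j) (t', x)
          = Dx j (fun q => ((∑ i, Dt (uJ i) q * σJ j i q) + Dt τJ q * GJ j q)
            + ∑ i, Dt (RJ i) q * SJ j i q) (t', x) := rfl
      rw [h0]
      rw [Dx_add (ContDiff.add (ContDiff.sum fun i _ => (contDiff_Dt (huJ i)).mul (hσJ j i))
        ((contDiff_Dt hτJ).mul (hGJ j)))
        (ContDiff.sum fun i _ => (contDiff_Dt (hRJ i)).mul (hSJ j i)) j (t', x)]
      rw [Dx_add (ContDiff.sum fun i _ => (contDiff_Dt (huJ i)).mul (hσJ j i))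
        ((contDiff_Dt hτJ).mul (hGJ j)) j (t', x)]
      rw [Dx_sum (fun i => (contDiff_Dt (huJ i)).mul (hσJ j i)) j (t', x)]
      rw [Dx_sum (fun i => (contDiff_Dt (hRJ i)).mul (hSJ j i)) j (t', x)]
      rw [Dx_mul (contDiff_Dt hτJ) (hGJ j) j (t', x)]
      rw [Finset.sum_congr rfl fun i _ => Dx_mul (contDiff_Dt (huJ i)) (hσJ j i) j (t', x)]
      rw [Finset.sum_congr rfl fun i _ => Dx_mul (contDiff_Dt (hRJ i)) (hSJ j i) j (t', x)]
    have hsumdiv : (∑ j, Dx j (FJ j) (t', x)) =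
        (∑ j, ∑ i, Dx j (Dt (uJ i)) (t', x) * σJ j i (t', x))
        + (∑ i, Dt (uJ i) (t', x) * (ρ * Dt (Dt (uJ i)) (t', x)))
        + (∑ j, Dx j (Dt τJ) (t', x) * GJ j (t', x))
        + Dt τJ (t', x) * (c * Dt (Dt τJ) (t', x)
            + (∑ i, ∑ j, aT i j * Dt (eJ i j) (t', x))
            + ∑ i, ∑ j, bT i j * Dx j (Dt (RJ i)) (t', x))
        + (∑ j, ∑ i, Dx j (Dt (RJ i)) (t', x) * SJ j i (t', x))
        + ∑ i, Dt (RJ i) (t', x) * ((∑ j, cT i j * Dt (Dt (RJ j)) (t', x))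
            + ∑ j, dT i j * Dx j (Dt τJ) (t', x)) := by
      have s1 : (∑ j, ∑ i, Dt (uJ i) (t', x) * Dx j (σJ j i) (t', x))
          = ∑ i, Dt (uJ i) (t', x) * (ρ * Dt (Dt (uJ i)) (t', x)) := by
        rw [Finset.sum_comm]
        refine Finset.sum_congr rfl fun i _ => ?_
        rw [← Finset.mul_sum, ← hJ1 t' x hx i]
      have s2 : (∑ j, Dt τJ (t', x) * Dx j (GJ j) (t', x))
          = Dt τJ (t', x) * (c * Dt (Dt τJ) (t', x)
            + (∑ i, ∑ j, aT i j * Dt (eJ i j) (t', x))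
            + ∑ i, ∑ j, bT i j * Dx j (Dt (RJ i)) (t', x)) := by
        rw [← Finset.mul_sum, hJ2 t' x hx]
      have s3 : (∑ j, ∑ i, Dt (RJ i) (t', x) * Dx j (SJ j i) (t', x))
          = ∑ i, Dt (RJ i) (t', x) * ((∑ j, cT i j * Dt (Dt (RJ j)) (t', x))
            + ∑ j, dT i j * Dx j (Dt τJ) (t', x)) := by
        rw [Finset.sum_comm]
        refine Finset.sum_congr rfl fun i _ => ?_
        rw [← Finset.mul_sum, hJ3 t' x hx i]
      calc (∑ j, Dx j (FJ j) (t', x))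
          = (∑ j, ∑ i, Dx j (Dt (uJ i)) (t', x) * σJ j i (t', x))
            + (∑ j, ∑ i, Dt (uJ i) (t', x) * Dx j (σJ j i) (t', x))
            + (∑ j, Dx j (Dt τJ) (t', x) * GJ j (t', x))
            + (∑ j, Dt τJ (t', x) * Dx j (GJ j) (t', x))
            + (∑ j, ∑ i, Dx j (Dt (RJ i)) (t', x) * SJ j i (t', x))
            + ∑ j, ∑ i, Dt (RJ i) (t', x) * Dx j (SJ j i) (t', x) := by
            rw [Finset.sum_congr rfl fun j _ => hdivj j]
            simp only [Finset.sum_add_distrib]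
            ring
        _ = _ := by rw [s1, s2, s3]
    rw [hLHSval, hsumdiv]
    have halg := energy_alg ρ c At Bt Ct Kt aT bT dT cT hAsym hBsym hCsym hKsym haSym
      hbSym hdSym hcSym
      (fun i => Dt (uJ i) (t', x)) (fun i => Dt (Dt (uJ i)) (t', x))
      (fun i => Dt (RJ i) (t', x)) (fun i => Dt (Dt (RJ i)) (t', x))
      (fun i => Dx i τJ (t', x)) (fun i => Dx i (Dt τJ) (t', x))
      (Dt τJ (t', x)) (Dt (Dt τJ) (t', x))
      (fun i j => eJ i j (t', x)) (fun i j => Dt (eJ i j) (t', x))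
      (fun i j => Dx j (Dt (uJ i)) (t', x)) (fun i j => Dx j (Dt (RJ i)) (t', x))
      (fun k l => Dx l (RJ k) (t', x)) (fun i j => hE'rel t' x i j)
    simp only [hσJdef, hGJdef, hSJdef]
    exact halg
  -- boundary vanishing of the flux
  have hFJ0 : ∀ j, ∀ x ∈ frontier Ω, FJ j (t, x) = 0 := by
    intro j x hx
    have hv : ∀ i, Dt (uJ i) (t, x) = 0 := by
      intro i
      have hfun : (fun s => uJ i (s, x)) = fun _ : ℝ => (0:ℝ) :=
        funext fun s => (hbc s x hx).1 i
      rw [← deriv_slice (huJ i) t x, hfun, deriv_const]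
    have hθ0 : Dt τJ (t, x) = 0 := by
      have hfun : (fun s => τJ (s, x)) = fun _ : ℝ => (0:ℝ) :=
        funext fun s => (hbc s x hx).2.1
      rw [← deriv_slice hτJ t x, hfun, deriv_const]
    have hM0 : ∀ i, Dt (RJ i) (t, x) = 0 := by
      intro i
      have hfun : (fun s => RJ i (s, x)) = fun _ : ℝ => (0:ℝ) :=
        funext fun s => (hbc s x hx).2.2 i
      rw [← deriv_slice (hRJ i) t x, hfun, deriv_const]
    simp only [hFJdef]
    simp [hv, hθ0, hM0]
  -- rewrite the goal integrand in joint form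
  have hgoalfun : (fun t' => (1/2 : ℝ) * ∫ x in Ω,
        (ρ * ∑ i, (deriv (fun s => u s x i) t') ^ 2
         + c * (deriv (fun s => τ s x) t') ^ 2
         + (∑ i, ∑ j, cT i j * deriv (fun s => R s x i) t'
             * deriv (fun s => R s x j) t')
         + (∑ i, ∑ j, ∑ k, ∑ l, At i j k l * strain (u t') k l x
             * strain (u t') i j x)
         + 2 * (∑ i, ∑ j, ∑ k, ∑ l, Bt i j k l * strain (u t') i j x
             * pd (fun z => R t' z k) l x)
         + (∑ i, ∑ j, Kt i j * pd (τ t') i x * pd (τ t') j x)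
         + ∑ i, ∑ j, ∑ k, ∑ l, Ct i j k l * pd (fun z => R t' z i) j x
             * pd (fun z => R t' z k) l x))
      = fun t' => (1/2 : ℝ) * ∫ x in Ω, WJ (t', x) := by
    funext t'
    congr 1
    refine integral_congr_ae (Filter.Eventually.of_forall fun x => ?_)
    simp only [hc1, hc2, hc3, hc4, hc5, hc6, hWJdef]
  rw [hgoalfun]
  -- differentiation under the integral sign
  have hWc : Continuous WJ := hWJsm.continuous
  have hdWc : Continuous (Dt WJ) := (contDiff_Dt hWJsm).continuous
  have hKcmp : IsCompact ((Set.Icc (t-1) (t+1)) ×ˢ closure Ω) :=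
    isCompact_Icc.prod hΩb.isCompact_closure
  obtain ⟨C, hC⟩ := hKcmp.exists_bound_of_continuousOn hdWc.continuousOn
  have hmeas : ∀ᶠ t' in nhds t,
      AEStronglyMeasurable (fun x => WJ (t', x)) (volume.restrict Ω) :=
    Filter.Eventually.of_forall fun t' =>
      (hWc.comp (continuous_const.prodMk continuous_id)).aestronglyMeasurable
  have hint0 : Integrable (fun x => WJ (t, x)) (volume.restrict Ω) :=
    integrableOn_of_bounded (hWc.comp (continuous_const.prodMk continuous_id)) hΩb
  have hmeas' : AEStronglyMeasurable (fun x => Dt WJ (t, x)) (volume.restrict Ω) :=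
    (hdWc.comp (continuous_const.prodMk continuous_id)).aestronglyMeasurable
  have hbound : ∀ᵐ x ∂(volume.restrict Ω), ∀ t' ∈ Metric.ball t 1,
      ‖Dt WJ (t', x)‖ ≤ C := by
    refine (ae_restrict_mem hΩm).mono fun x hx t' ht' => ?_
    refine hC (t', x) (Set.mem_prod.mpr ⟨?_, subset_closure hx⟩)
    have h := Metric.mem_ball.mp ht'
    rw [Real.dist_eq] at h
    have h2 := abs_lt.mp h
    exact Set.mem_Icc.mpr ⟨by linarith [h2.1], by linarith [h2.2]⟩
  have hbint : Integrable (fun _ : V3 => C) (volume.restrict Ω) :=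
    MeasureTheory.integrableOn_const hΩb.measure_lt_top.ne
  have hdiff : ∀ᵐ x ∂(volume.restrict Ω), ∀ t' ∈ Metric.ball t 1,
      HasDerivAt (fun s => WJ (s, x)) (Dt WJ (t', x)) t' :=
    Filter.Eventually.of_forall fun x t' _ => hasDerivAt_slice hWJsm t' x
  have hkey := (hasDerivAt_integral_of_dominated_loc_of_deriv_le (Metric.ball_mem_nhds t one_pos) hmeas hint0
    hmeas' hbound hbint hdiff).2
  have hEd := hkey.const_mul (1/2 : ℝ)
  rw [hEd.deriv]
  -- the derivative integral vanishes by the divergence theorem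
  have hval : (∫ x in Ω, Dt WJ (t, x)) = 0 := by
    have h1 : (∫ x in Ω, Dt WJ (t, x))
        = ∫ x in Ω, 2 * ∑ j, pd (fun y => FJ j (t, y)) j x := by
      refine MeasureTheory.setIntegral_congr_fun hΩm fun x hx => ?_
      rw [hmaster t x hx]
      congr 1
      exact Finset.sum_congr rfl fun j _ => (pd_slice (hFJ j) t x j).symm
    rw [h1, MeasureTheory.integral_const_mul]
    rw [MeasureTheory.integral_finset_sum _ (fun j _ => by
      have hcont : Continuous (fun x => pd (fun y => FJ j (t, y)) j x) :=
        (contDiff_fderiv_apply (contDiff_slice_space (hFJ j) t) _).continuous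
      exact integrableOn_of_bounded hcont hΩb)]
    have hz : ∀ j, (∫ x in Ω, pd (fun y => FJ j (t, y)) j x) = 0 := fun j =>
      integral_pd_zero Ω hΩo hΩb hΩm (fun y => FJ j (t, y))
        (contDiff_slice_space (hFJ j) t) (fun x hx => hFJ0 j x hx) j
    simp [hz]
  rw [hval]
  norm_num
end

section
/- Suppose uniqueness holds for the backward-in-time type III problem with null initial data and no sources (i.e., the only backward solution vanishing initially is the zero solution). Then the forward type III problem admits no nontrivial solution localized in time: if (u, τ, R) solves the homogeneous forward type III system with homogeneous Dirichlet boundary conditions and there exists t₀ > 0 with (u, τ, R)(t) ≡ (0,0,0) for all t ≥ t₀, then (u, τ, R) ≡ (0,0,0) for all t ≥ 0. -/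
open MeasureTheory

private lemma dcs (g : ℝ → ℝ) (c t : ℝ) : deriv (fun s => g (c - s)) t = -deriv g (c - t) :=
  deriv_comp_const_sub g c t

private lemma derivZeroOnIci (f : ℝ → ℝ) (t₀ : ℝ) (hf : DifferentiableAt ℝ f t₀)
    (h : ∀ s, t₀ ≤ s → f s = 0) : deriv f t₀ = 0 := by
  have h1 : HasDerivWithinAt f 0 (Set.Ici t₀) t₀ :=
    (hasDerivWithinAt_const t₀ (Set.Ici t₀) (0 : ℝ)).congr
      (fun s hs => h s hs) (h t₀ le_rfl)
  have h2 : HasDerivWithinAt f (deriv f t₀) (Set.Ici t₀) t₀ :=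
    hf.hasDerivAt.hasDerivWithinAt
  have := h1.derivWithin (uniqueDiffOn_Ici t₀ t₀ Set.self_mem_Ici)
  rw [h2.derivWithin (uniqueDiffOn_Ici t₀ t₀ Set.self_mem_Ici)] at this
  exact this

private lemma pd_neg (f : V3 → ℝ) (j : Fin 3) (x : V3) :
    pd (fun y => -f y) j x = -pd f j x := by
  simp [pd, fderiv_neg]

/-- Impossibility of localization in time.  Suppose uniqueness holds for
the backward-in-time type III problem with null initial data and no sources (the
hypothesis `hbackunique` below, quantified over all smooth backward solutions).  Then
the forward homogeneous type III problem admits no nontrivial solution localized in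
time: if a solution `(u, τ, R)` of the forward system with homogeneous Dirichlet data
vanishes identically for all `t ≥ t₀`, then it vanishes identically for all `t ≥ 0`. -/
theorem stmt18 (Ω : Set V3) (hΩo : IsOpen Ω) (hΩb : Bornology.IsBounded Ω)
    (hΩm : MeasurableSet Ω)
    (ρ c : ℝ) (hρ : 0 < ρ) (hc : 0 < c)
    (At Bt Ct Ctil : Fin 3 → Fin 3 → Fin 3 → Fin 3 → ℝ)
    (Kt Ktil aT bT dT cT : Fin 3 → Fin 3 → ℝ)
    (hAsym : ∀ i j k l, At i j k l = At j i k l ∧ At i j k l = At k l i j)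
    (hBsym : ∀ i j k l, Bt i j k l = Bt j i k l ∧ Bt i j k l = Bt k l i j)
    (hCsym : ∀ i j k l, Ct i j k l = Ct j i k l ∧ Ct i j k l = Ct k l i j)
    (hCtilsym : ∀ i j k l, Ctil i j k l = Ctil k l i j)
    (hKsym : ∀ i j, Kt i j = Kt j i) (hKtilsym : ∀ i j, Ktil i j = Ktil j i)
    (haSym : ∀ i j, aT i j = aT j i) (hbSym : ∀ i j, bT i j = bT j i)
    (hdSym : ∀ i j, dT i j = dT j i) (hcSym : ∀ i j, cT i j = cT j i)
    -- uniqueness for the backward-in-time problem (Proposition 1)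
    (hbackunique : ∀ (ub Rb : ℝ → V3 → Fin 3 → ℝ) (τb : ℝ → V3 → ℝ),
      (∀ i, ContDiff ℝ (⊤ : ℕ∞) fun p : ℝ × V3 => ub p.1 p.2 i) →
      (ContDiff ℝ (⊤ : ℕ∞) fun p : ℝ × V3 => τb p.1 p.2) →
      (∀ i, ContDiff ℝ (⊤ : ℕ∞) fun p : ℝ × V3 => Rb p.1 p.2 i) →
      (∀ t : ℝ, ∀ x ∈ frontier Ω,
        (∀ i, ub t x i = 0) ∧ τb t x = 0 ∧ ∀ i, Rb t x i = 0) →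
      -- null initial data
      (∀ x : V3,
        (∀ i, ub 0 x i = 0 ∧ deriv (fun s => ub s x i) 0 = 0) ∧
        (τb 0 x = 0 ∧ deriv (fun s => τb s x) 0 = 0) ∧
        ∀ i, Rb 0 x i = 0 ∧ deriv (fun s => Rb s x i) 0 = 0) →
      -- backward-in-time type III field equations (6.1), no sources
      (∀ t : ℝ, ∀ x ∈ Ω, ∀ i,
        ρ * deriv (fun s => deriv (fun r => ub r x i) s) t =
          ∑ j, pd (fun y =>
            (∑ k, ∑ l, At j i k l * strain (ub t) k l y)
            + aT j i * deriv (fun s => τb s y) t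
            + ∑ k, ∑ l, Bt j i k l * pd (fun z => Rb t z l) k y) j x) →
      (∀ t : ℝ, ∀ x ∈ Ω,
        c * deriv (fun s => deriv (fun r => τb r x) s) t =
          (∑ i, ∑ j, aT i j * deriv (fun s => strain (ub s) i j x) t)
          + (∑ i, pd (fun y =>
              (∑ j, dT i j * deriv (fun s => Rb s y j) t)
              + (∑ j, Kt i j * pd (τb t) j y)
              - ∑ j, Ktil i j * pd (fun z => deriv (fun s => τb s z) t) j y) i x)
          + ∑ i, ∑ j, bT i j * pd (fun z => deriv (fun s => Rb s z i) t) j x) →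
      (∀ t : ℝ, ∀ x ∈ Ω, ∀ i,
        (∑ j, cT i j * deriv (fun s => deriv (fun r => Rb r x j) s) t) =
          (∑ j, pd (fun y =>
            (∑ k, ∑ l, Bt k l j i * strain (ub t) k l y)
            + bT j i * deriv (fun s => τb s y) t
            + (∑ k, ∑ l, Ct j i k l * pd (fun z => Rb t z k) l y)
            - ∑ k, ∑ l, Ctil j i k l
                * pd (fun z => deriv (fun s => Rb s z k) t) l y) j x)
          + ∑ j, dT i j * pd (fun z => deriv (fun s => τb s z) t) j x) →
      ∀ t : ℝ, 0 ≤ t → ∀ x ∈ Ω, (∀ i, ub t x i = 0) ∧ τb t x = 0 ∧ ∀ i, Rb t x i = 0)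
    -- a forward solution, localized in time
    (u R : ℝ → V3 → Fin 3 → ℝ) (τ : ℝ → V3 → ℝ)
    (hu : ∀ i, ContDiff ℝ (⊤ : ℕ∞) fun p : ℝ × V3 => u p.1 p.2 i)
    (hτ : ContDiff ℝ (⊤ : ℕ∞) fun p : ℝ × V3 => τ p.1 p.2)
    (hR : ∀ i, ContDiff ℝ (⊤ : ℕ∞) fun p : ℝ × V3 => R p.1 p.2 i)
    (hbc : ∀ t : ℝ, ∀ x ∈ frontier Ω,
      (∀ i, u t x i = 0) ∧ τ t x = 0 ∧ ∀ i, R t x i = 0)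
    -- forward type III field equations (3.10), no sources
    (heq1 : ∀ t : ℝ, ∀ x ∈ Ω, ∀ i,
      ρ * deriv (fun s => deriv (fun r => u r x i) s) t =
        ∑ j, pd (fun y =>
          (∑ k, ∑ l, At j i k l * strain (u t) k l y)
          - aT j i * deriv (fun s => τ s y) t
          + ∑ k, ∑ l, Bt j i k l * pd (fun z => R t z l) k y) j x)
    (heq2 : ∀ t : ℝ, ∀ x ∈ Ω,
      c * deriv (fun s => deriv (fun r => τ r x) s) t =
        -(∑ i, ∑ j, aT i j * deriv (fun s => strain (u s) i j x) t)
        + (∑ i, pd (fun y =>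
            (-(∑ j, dT i j * deriv (fun s => R s y j) t))
            + (∑ j, Kt i j * pd (τ t) j y)
            + ∑ j, Ktil i j * pd (fun z => deriv (fun s => τ s z) t) j y) i x)
        - ∑ i, ∑ j, bT i j * pd (fun z => deriv (fun s => R s z i) t) j x)
    (heq3 : ∀ t : ℝ, ∀ x ∈ Ω, ∀ i,
      (∑ j, cT i j * deriv (fun s => deriv (fun r => R r x j) s) t) =
        (∑ j, pd (fun y =>
          (∑ k, ∑ l, Bt k l j i * strain (u t) k l y)
          - bT j i * deriv (fun s => τ s y) t
          + (∑ k, ∑ l, Ct j i k l * pd (fun z => R t z k) l y)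
          + ∑ k, ∑ l, Ctil j i k l
              * pd (fun z => deriv (fun s => R s z k) t) l y) j x)
        - ∑ j, dT i j * pd (fun z => deriv (fun s => τ s z) t) j x)
    -- localization in time
    (t₀ : ℝ) (ht₀ : 0 < t₀)
    (hloc : ∀ t : ℝ, t₀ ≤ t → ∀ x : V3,
      (∀ i, u t x i = 0) ∧ τ t x = 0 ∧ ∀ i, R t x i = 0) :
    ∀ t : ℝ, 0 ≤ t → ∀ x ∈ Ω, (∀ i, u t x i = 0) ∧ τ t x = 0 ∧ ∀ i, R t x i = 0 := by
  -- slice smoothness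
  have hus : ∀ (x : V3) (i : Fin 3), ContDiff ℝ (⊤ : ℕ∞) (fun s => u s x i) :=
    fun x i => (hu i).comp (contDiff_id.prodMk contDiff_const)
  have hτs : ∀ (x : V3), ContDiff ℝ (⊤ : ℕ∞) (fun s => τ s x) :=
    fun x => hτ.comp (contDiff_id.prodMk contDiff_const)
  have hRs : ∀ (x : V3) (i : Fin 3), ContDiff ℝ (⊤ : ℕ∞) (fun s => R s x i) :=
    fun x i => (hR i).comp (contDiff_id.prodMk contDiff_const)
  -- time-reversal derivative rules (as ∀-statements usable by simp)
  have hdu : ∀ (y : V3) (i : Fin 3) (t : ℝ),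
      deriv (fun s => u (t₀ - s) y i) t = -deriv (fun s => u s y i) (t₀ - t) :=
    fun y i t => dcs (fun s => u s y i) t₀ t
  have hdτ : ∀ (y : V3) (t : ℝ),
      deriv (fun s => τ (t₀ - s) y) t = -deriv (fun s => τ s y) (t₀ - t) :=
    fun y t => dcs (fun s => τ s y) t₀ t
  have hdR : ∀ (y : V3) (i : Fin 3) (t : ℝ),
      deriv (fun s => R (t₀ - s) y i) t = -deriv (fun s => R s y i) (t₀ - t) :=
    fun y i t => dcs (fun s => R s y i) t₀ t
  have hd2u : ∀ (y : V3) (i : Fin 3) (t : ℝ),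
      deriv (fun s => deriv (fun r => u r y i) (t₀ - s)) t
        = -deriv (fun s => deriv (fun r => u r y i) s) (t₀ - t) :=
    fun y i t => dcs (deriv (fun r => u r y i)) t₀ t
  have hd2τ : ∀ (y : V3) (t : ℝ),
      deriv (fun s => deriv (fun r => τ r y) (t₀ - s)) t
        = -deriv (fun s => deriv (fun r => τ r y) s) (t₀ - t) :=
    fun y t => dcs (deriv (fun r => τ r y)) t₀ t
  have hd2R : ∀ (y : V3) (i : Fin 3) (t : ℝ),
      deriv (fun s => deriv (fun r => R r y i) (t₀ - s)) t
        = -deriv (fun s => deriv (fun r => R r y i) s) (t₀ - t) :=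
    fun y i t => dcs (deriv (fun r => R r y i)) t₀ t
  have hdstr : ∀ (i j : Fin 3) (y : V3) (t : ℝ),
      deriv (fun s => strain (u (t₀ - s)) i j y) t
        = -deriv (fun s => strain (u s) i j y) (t₀ - t) :=
    fun i j y t => dcs (fun s => strain (u s) i j y) t₀ t
  -- apply backward uniqueness to the time-reversed solution
  intro t ht x hx
  by_cases htc : t₀ ≤ t
  · exact hloc t htc x
  · have hkey :
        ∀ t : ℝ, 0 ≤ t → ∀ x ∈ Ω,
          (∀ i, u (t₀ - t) x i = 0) ∧ τ (t₀ - t) x = 0 ∧ ∀ i, R (t₀ - t) x i = 0 := by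
      apply hbackunique (fun s => u (t₀ - s)) (fun s => R (t₀ - s)) (fun s => τ (t₀ - s))
      · exact fun i => (hu i).comp ((contDiff_const.sub contDiff_fst).prodMk contDiff_snd)
      · exact hτ.comp ((contDiff_const.sub contDiff_fst).prodMk contDiff_snd)
      · exact fun i => (hR i).comp ((contDiff_const.sub contDiff_fst).prodMk contDiff_snd)
      · exact fun t x hxf => hbc (t₀ - t) x hxf
      · -- null initial data
        intro y
        refine ⟨fun i => ⟨?_, ?_⟩, ⟨?_, ?_⟩, fun i => ⟨?_, ?_⟩⟩
        · simpa using (hloc t₀ le_rfl y).1 i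
        · rw [hdu y i 0, sub_zero]
          rw [derivZeroOnIci (fun s => u s y i) t₀
            (((hus y i).differentiable (by simp)) t₀)
            (fun s hs => (hloc s hs y).1 i)]
          · ring
        · simpa using (hloc t₀ le_rfl y).2.1
        · rw [hdτ y 0, sub_zero]
          rw [derivZeroOnIci (fun s => τ s y) t₀
            (((hτs y).differentiable (by simp)) t₀)
            (fun s hs => (hloc s hs y).2.1)]
          · ring
        · simpa using (hloc t₀ le_rfl y).2.2 i
        · rw [hdR y i 0, sub_zero]
          rw [derivZeroOnIci (fun s => R s y i) t₀
            (((hRs y i).differentiable (by simp)) t₀)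
            (fun s hs => (hloc s hs y).2.2 i)]
          · ring
      · -- backward equation 1
        intro t x hxm i
        have H := heq1 (t₀ - t) x hxm i
        simp only [hdu, hdτ, hdR, hd2u, hd2τ, hd2R, hdstr, deriv.neg, deriv.fun_neg, pd_neg, neg_neg] at H ⊢
        simp only [mul_neg, neg_mul, sub_eq_add_neg, neg_neg, Finset.sum_neg_distrib] at H ⊢
        exact H
      · -- backward equation 2
        intro t x hxm
        have H := heq2 (t₀ - t) x hxm
        simp only [hdu, hdτ, hdR, hd2u, hd2τ, hd2R, hdstr, deriv.neg, deriv.fun_neg, pd_neg, neg_neg] at H ⊢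
        simp only [mul_neg, neg_mul, sub_eq_add_neg, neg_neg, Finset.sum_neg_distrib] at H ⊢
        exact H
      · -- backward equation 3
        intro t x hxm i
        have H := heq3 (t₀ - t) x hxm i
        simp only [hdu, hdτ, hdR, hd2u, hd2τ, hd2R, hdstr, deriv.neg, deriv.fun_neg, pd_neg, neg_neg] at H ⊢
        simp only [mul_neg, neg_mul, sub_eq_add_neg, neg_neg, Finset.sum_neg_distrib] at H ⊢
        exact H
    have := hkey (t₀ - t) (by linarith) x hx
    simpa [sub_sub_cancel] using this
end
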